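/- With notation as in the context (a super Frobenius algebra datum), the tensors A_{ijk} = φ(θ_A e_i e_j e_k), B_{ij}^k = φ(θ_B e_i e_j f^k), C_i^{jk} = φ(θ_C e_i f^j f^k), together with arbitrary scalars D_i ∈ K vanishing unless |i| = 0, satisfy the defining constraints of a quadratic super quantum Airy structure with vanishing structure constants f_{ij}^k = 0. Explicitly, for all i,j,a,b ∈ ι: (evenness) A_{iab} = 0, B_{ia}^b = 0 and C_i^{ab} = 0 unless |i|+|a|+|b| = 0; (symmetry) A_{iab} = (−1)^{|a||b|} A_{iba}, A_{jia} = (−1)^{|i||j|} A_{ija}, and C_i^{ab} = (−1)^{|a||b|} C_i^{ba}; (f) (−1)^{|i||j|} B_{ij}^k = B_{ji}^k for all k; (BA) Σ_c [B_{ia}^c A_{jcb} + (−1)^{|a||b|} B_{ib}^c A_{jca}] + (−1)^{|i||j|} Σ_k B_{ij}^k A_{kab} equals (−1)^{|i||j|} times the same expression with i and j exchanged; (BB−CA) Σ_c [B_{ia}^c B_{jc}^b + (−1)^{|a||b|} C_i^{bc} A_{jca}] + (−1)^{|i||j|} Σ_k B_{ij}^k B_{ka}^b equals (−1)^{|i||j|}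 times the same expression with i and j exchanged; (CB) Σ_c [C_i^{ac} B_{jc}^b + (−1)^{|a||b|} C_i^{bc} B_{jc}^a] + (−1)^{|i||j|} Σ_k B_{ij}^k C_k^{ab} equals (−1)^{|i||j|} times the same expression with i and j exchanged; (CA−BD) (1/2) Σ_{a,b} C_i^{ba} A_{jab} + (−1)^{|i||j|} Σ_k B_{ij}^k D_k equals (−1)^{|i||j|} times the same expression with i and j exchanged. -/

import Mathlib

/-!
Statement 2: the tensors `A_{ijk} = φ(θ_A e_i e_j e_k)`, `B_{ij}^k = φ(θ_B e_i e_j f^k)`,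
`C_i^{jk} = φ(θ_C e_i f^j f^k)` built from a super Frobenius algebra datum, together with
arbitrary even scalars `D_i`, satisfy the defining constraints of a quadratic super
quantum Airy structure with vanishing structure constants `f_{ij}^k = 0`.
-/

noncomputable section

/-- The sign `(−1)^e` for `e ∈ ℤ/2`. -/
def sg (K : Type) [Field K] (e : ZMod 2) : K := if e = 0 then 1 else -1

variable (K : Type) [Field K] [CharZero K]
variable (ι : Type) [Fintype ι] [DecidableEq ι] (p : ι → ZMod 2)
variable (𝔸 : Type) [Ring 𝔸] [Algebra K 𝔸]

section Defs

variable (A B C : ι → ι → ι → K) (D : ι → K)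

/-- Left-hand side of constraint (BA). -/
def lhsBA (i j a b : ι) : K :=
  (∑ c : ι, (B i a c * A j c b + sg K (p a * p b) * (B i b c * A j c a)))
    + sg K (p i * p j) * ∑ k : ι, B i j k * A k a b

/-- Left-hand side of constraint (BB−CA). -/
def lhsBBCA (i j a b : ι) : K :=
  (∑ c : ι, (B i a c * B j c b + sg K (p a * p b) * (C i b c * A j c a)))
    + sg K (p i * p j) * ∑ k : ι, B i j k * B k a b

/-- Left-hand side of constraint (CB). -/
def lhsCB (i j a b : ι) : K :=
  (∑ c : ι, (C i a c * B j c b + sg K (p a * p b) * (C i b c * B j c a)))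
    + sg K (p i * p j) * ∑ k : ι, B i j k * C k a b

/-- Left-hand side of constraint (CA−BD). -/
def lhsCABD (i j : ι) : K :=
  (2 : K)⁻¹ * (∑ a : ι, ∑ b : ι, C i b a * A j a b)
    + sg K (p i * p j) * ∑ k : ι, B i j k * D k

end Defs

section AuxLemmas

variable {K ι 𝔸}
variable {p : ι → ZMod 2} {bs : Module.Basis ι K 𝔸}

lemma aux_sg_mul_self (e : ZMod 2) : sg K e * sg K e = 1 := by
  by_cases h : e = 0 <;> simp [sg, h]

lemma aux_zmod_ne (e : ZMod 2) (h : e ≠ 0) : e = 1 := by revert h; revert e; decide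

lemma aux_mul_mem
    (hgrade : ∀ i j : ι, bs i * bs j ∈ Submodule.span K (bs '' {k | p k = p i + p j}))
    {r s : ZMod 2} {x y : 𝔸}
    (hx : x ∈ Submodule.span K (bs '' {k | p k = r}))
    (hy : y ∈ Submodule.span K (bs '' {k | p k = s})) :
    x * y ∈ Submodule.span K (bs '' {k | p k = r + s}) := by
  have h1 : Submodule.span K (bs '' {k | p k = r}) * Submodule.span K (bs '' {k | p k = s})
      ≤ Submodule.span K (bs '' {k | p k = r + s}) := by
    rw [Submodule.span_mul_span]
    apply Submodule.span_le.2
    rintro z ⟨_, ⟨i, hi, rfl⟩, _, ⟨j, hj, rfl⟩, rfl⟩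
    have h := hgrade i j
    simp only [Set.mem_setOf_eq] at hi hj
    rwa [hi, hj] at h
  exact h1 (Submodule.mul_mem_mul hx hy)

lemma aux_scomm
    (hcomm : ∀ i j : ι, bs i * bs j = sg K (p i * p j) • (bs j * bs i))
    {r s : ZMod 2} {x y : 𝔸}
    (hx : x ∈ Submodule.span K (bs '' {k | p k = r}))
    (hy : y ∈ Submodule.span K (bs '' {k | p k = s})) :
    x * y = sg K (r * s) • (y * x) := by
  induction hx using Submodule.span_induction with
  | mem x hxm =>
    induction hy using Submodule.span_induction with
    | mem y hym =>
      obtain ⟨i, hi, rfl⟩ := hxm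
      obtain ⟨j, hj, rfl⟩ := hym
      simp only [Set.mem_setOf_eq] at hi hj
      rw [← hi, ← hj]
      exact hcomm i j
    | zero => simp
    | add y z hy hz ihy ihz => rw [mul_add, ihy, ihz, add_mul, smul_add]
    | smul a y hy ihy => rw [mul_smul_comm, ihy, smul_mul_assoc, smul_comm]
  | zero => simp
  | add x z hx hz ihx ihz => rw [add_mul, ihx, ihz, mul_add, smul_add]
  | smul a x hx ihx => rw [smul_mul_assoc, ihx, mul_smul_comm, smul_comm]

lemma aux_phi0 (φ : 𝔸 →ₗ[K] K) (hφ : ∀ k : ι, p k = 1 → φ (bs k) = 0) {x : 𝔸}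
    (hx : x ∈ Submodule.span K (bs '' {k | p k = 1})) : φ x = 0 := by
  induction hx using Submodule.span_induction with
  | mem x hxm =>
    obtain ⟨i, hi, rfl⟩ := hxm
    exact hφ i hi
  | zero => simp
  | add x y hx hy ihx ihy => simp [ihx, ihy]
  | smul a x hx ihx => simp [ihx]

end AuxLemmas

/-- Given a super Frobenius algebra datum — a basis `(e_i)` of a
supercommutative graded algebra `𝔸`, an even functional `φ`, a `φ`-dual family `(f^j)`,
and even elements `θ_A, θ_B, θ_C` — the tensors `A_{iab} = φ(θ_A e_i e_a e_b)`,
`B_{ia}^b = φ(θ_B e_i e_a f^b)`, `C_i^{ab} = φ(θ_C e_i f^a f^b)`, together with arbitrary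
even scalars `D_i`, satisfy all the constraints of a quadratic super quantum Airy
structure with vanishing structure constants. -/
theorem statement2
    (bs : Module.Basis ι K 𝔸)
    (hcomm : ∀ i j : ι, bs i * bs j = sg K (p i * p j) • (bs j * bs i))
    (hgrade : ∀ i j : ι, bs i * bs j ∈ Submodule.span K (bs '' {k | p k = p i + p j}))
    (φ : 𝔸 →ₗ[K] K) (hφ : ∀ k : ι, p k = 1 → φ (bs k) = 0)
    (f : ι → 𝔸) (hfspan : ∀ j : ι, f j ∈ Submodule.span K (bs '' {k | p k = p j}))
    (hfdual : ∀ i j : ι, φ (bs i * f j) = if i = j then (1 : K) else 0)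
    (θA θB θC : 𝔸)
    (hθA : θA ∈ Submodule.span K (bs '' {k | p k = 0}))
    (hθB : θB ∈ Submodule.span K (bs '' {k | p k = 0}))
    (hθC : θC ∈ Submodule.span K (bs '' {k | p k = 0}))
    (D : ι → K) (hD : ∀ i : ι, p i ≠ 0 → D i = 0)
    (A : ι → ι → ι → K) (hA : ∀ i a b : ι, A i a b = φ (θA * bs i * bs a * bs b))
    (B : ι → ι → ι → K) (hB : ∀ i a b : ι, B i a b = φ (θB * bs i * bs a * f b))
    (C : ι → ι → ι → K) (hC : ∀ i a b : ι, C i a b = φ (θC * bs i * f a * f b)) :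
    -- (evenness)
    (∀ i a b : ι, p i + p a + p b ≠ 0 → A i a b = 0 ∧ B i a b = 0 ∧ C i a b = 0) ∧
    -- (symmetry)
    (∀ i a b : ι, A i a b = sg K (p a * p b) * A i b a) ∧
    (∀ i j a : ι, A j i a = sg K (p i * p j) * A i j a) ∧
    (∀ i a b : ι, C i a b = sg K (p a * p b) * C i b a) ∧
    -- (f): vanishing structure constants
    (∀ i j k : ι, sg K (p i * p j) * B i j k = B j i k) ∧
    -- (BA)
    (∀ i j a b : ι,
      lhsBA K ι p A B i j a b = sg K (p i * p j) * lhsBA K ι p A B j i a b) ∧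
    -- (BB−CA)
    (∀ i j a b : ι,
      lhsBBCA K ι p A B C i j a b = sg K (p i * p j) * lhsBBCA K ι p A B C j i a b) ∧
    -- (CB)
    (∀ i j a b : ι,
      lhsCB K ι p B C i j a b = sg K (p i * p j) * lhsCB K ι p B C j i a b) ∧
    -- (CA−BD)
    (∀ i j : ι,
      lhsCABD K ι p A B C D i j = sg K (p i * p j) * lhsCABD K ι p A B C D j i) := by
  -- basic membership facts
  have memb : ∀ i : ι, bs i ∈ Submodule.span K (bs '' {k | p k = p i}) :=
    fun i => Submodule.subset_span ⟨i, rfl, rfl⟩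
  -- even elements are central
  have central : ∀ t : 𝔸, t ∈ Submodule.span K (bs '' {k | p k = 0}) →
      ∀ x : 𝔸, t * x = x * t := by
    intro t ht
    have h : (LinearMap.mulLeft K t) = (LinearMap.mulRight K t) := by
      apply bs.ext
      intro i
      simp only [LinearMap.mulLeft_apply, LinearMap.mulRight_apply]
      have h2 := aux_scomm hcomm ht (memb i)
      simpa [sg, zero_mul] using h2
    intro x
    exact LinearMap.congr_fun h x
  have cB := central θB hθB
  have cC := central θC hθC
  have swap : ∀ t : 𝔸, (∀ z : 𝔸, t * z = z * t) → ∀ x y : 𝔸, x * (t * y) = t * (x * y) := by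
    intro t ht x y; rw [← mul_assoc, ← ht, mul_assoc]
  -- expansion in the basis via the dual family
  have expand : ∀ x : 𝔸, ∑ c : ι, φ (x * f c) • bs c = x := by
    intro x
    have h : ∀ c : ι, φ (x * f c) = bs.repr x c := by
      intro c
      conv_lhs => rw [← bs.sum_repr x]
      rw [Finset.sum_mul, map_sum]
      simp [smul_mul_assoc, hfdual]
    simp only [h]
    exact bs.sum_repr x
  have keyA : ∀ x u v : 𝔸,
      (∑ c : ι, φ (x * f c) * φ (u * bs c * v)) = φ (u * x * v) := by
    intro x u v
    conv_rhs => rw [← expand x]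
    rw [Finset.mul_sum, Finset.sum_mul, map_sum]
    refine Finset.sum_congr rfl fun c _ => ?_
    rw [mul_smul_comm, smul_mul_assoc, map_smul, smul_eq_mul]
  have keyB : ∀ x u v w : 𝔸,
      (∑ c : ι, φ (x * f c) * φ (u * bs c * v * w)) = φ (u * x * v * w) := by
    intro x u v w
    have h := keyA x u (v * w)
    simpa only [mul_assoc] using h
  -- scalar moving lemmas
  have sgmove : ∀ (s : K) (g X V : 𝔸), φ (g * (s • X) * V) = s * φ (g * X * V) := by
    intro s g X V
    rw [mul_smul_comm, smul_mul_assoc, map_smul, smul_eq_mul]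
  have sgmove2 : ∀ (s : K) (g X V : 𝔸), φ (g * X * (s • V)) = s * φ (g * X * V) := by
    intro s g X V
    rw [mul_smul_comm, map_smul, smul_eq_mul]
  have hsg1 : ∀ (g : 𝔸) (x y : ι) (V : 𝔸),
      φ (g * (bs x * bs y) * V) = sg K (p x * p y) * φ (g * (bs y * bs x) * V) := by
    intro g x y V
    rw [hcomm x y, sgmove]
  have hsg2 : ∀ (g W : 𝔸) (r s : ZMod 2) (x y : 𝔸),
      x ∈ Submodule.span K (bs '' {k | p k = r}) →
      y ∈ Submodule.span K (bs '' {k | p k = s}) →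
      φ (g * W * (x * y)) = sg K (r * s) * φ (g * W * (y * x)) := by
    intro g W r s x y hx hy
    rw [aux_scomm hcomm hx hy, sgmove2]
  -- contracted sums
  have TBA1 : ∀ i j a b : ι, (∑ c : ι, B i a c * A j c b)
      = φ (θA * θB * (bs j * bs i) * (bs a * bs b)) := by
    intro i j a b
    simp only [hA, hB]
    rw [keyA (θB * bs i * bs a) (θA * bs j) (bs b)]
    congr 1
    simp only [mul_assoc]
    rw [swap θB cB (bs j)]
  have TBA3 : ∀ i j a b : ι, (∑ k : ι, B i j k * A k a b)
      = φ (θA * θB * (bs i * bs j) * (bs a * bs b)) := by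
    intro i j a b
    simp only [hA, hB]
    rw [keyB (θB * bs i * bs j) θA (bs a) (bs b)]
    congr 1
    simp only [mul_assoc]
  have TBB1 : ∀ i j a b : ι, (∑ c : ι, B i a c * B j c b)
      = φ (θB * θB * (bs j * bs i) * (bs a * f b)) := by
    intro i j a b
    simp only [hB]
    rw [keyA (θB * bs i * bs a) (θB * bs j) (f b)]
    congr 1
    simp only [mul_assoc]
    rw [swap θB cB (bs j)]
  have TCA2 : ∀ i j a b : ι, (∑ c : ι, C i b c * A j c a)
      = φ (θA * θC * (bs j * bs i) * (f b * bs a)) := by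
    intro i j a b
    simp only [hA, hC]
    rw [keyA (θC * bs i * f b) (θA * bs j) (bs a)]
    congr 1
    simp only [mul_assoc]
    rw [swap θC cC (bs j)]
  have TBB3 : ∀ i j a b : ι, (∑ k : ι, B i j k * B k a b)
      = φ (θB * θB * (bs i * bs j) * (bs a * f b)) := by
    intro i j a b
    simp only [hB]
    rw [keyB (θB * bs i * bs j) θB (bs a) (f b)]
    congr 1
    simp only [mul_assoc]
  have TCB1 : ∀ i j a b : ι, (∑ c : ι, C i a c * B j c b)
      = φ (θB * θC * (bs j * bs i) * (f a * f b)) := by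
    intro i j a b
    simp only [hB, hC]
    rw [keyA (θC * bs i * f a) (θB * bs j) (f b)]
    congr 1
    simp only [mul_assoc]
    rw [swap θC cC (bs j)]
  have TCB3 : ∀ i j a b : ι, (∑ k : ι, B i j k * C k a b)
      = φ (θB * θC * (bs i * bs j) * (f a * f b)) := by
    intro i j a b
    simp only [hB, hC]
    rw [keyB (θB * bs i * bs j) θC (f a) (f b)]
    congr 1
    simp only [mul_assoc]
    rw [swap θB cB θC]
  -- (f) constraint
  have hf : ∀ i j k : ι, sg K (p i * p j) * B i j k = B j i k := by
    intro i j k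
    simp only [hB]
    rw [show θB * bs j * bs i * f k = θB * (bs j * bs i) * f k by rw [mul_assoc θB],
      show θB * bs i * bs j * f k = θB * (bs i * bs j) * f k by rw [mul_assoc θB],
      hsg1 θB j i (f k), mul_comm (p j) (p i)]
  -- evenness
  have even : ∀ i a b : ι, p i + p a + p b ≠ 0 → A i a b = 0 ∧ B i a b = 0 ∧ C i a b = 0 := by
    intro i a b h
    have h1 : p i + p a + p b = 1 := aux_zmod_ne _ h
    refine ⟨?_, ?_, ?_⟩
    · rw [hA]
      apply aux_phi0 φ hφ
      have := aux_mul_mem hgrade (aux_mul_mem hgrade (aux_mul_mem hgrade hθA (memb i)) (memb a)) (memb b)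
      rwa [zero_add, h1] at this
    · rw [hB]
      apply aux_phi0 φ hφ
      have := aux_mul_mem hgrade (aux_mul_mem hgrade (aux_mul_mem hgrade hθB (memb i)) (memb a)) (hfspan b)
      rwa [zero_add, h1] at this
    · rw [hC]
      apply aux_phi0 φ hφ
      have := aux_mul_mem hgrade (aux_mul_mem hgrade (aux_mul_mem hgrade hθC (memb i)) (hfspan a)) (hfspan b)
      rwa [zero_add, h1] at this
  -- symmetry of A in last two indices
  have symA : ∀ i a b : ι, A i a b = sg K (p a * p b) * A i b a := by
    intro i a b
    simp only [hA]
    rw [show θA * bs i * bs a * bs b = θA * bs i * (bs a * bs b) by rw [mul_assoc],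
      show θA * bs i * bs b * bs a = θA * bs i * (bs b * bs a) by rw [mul_assoc],
      hsg2 θA (bs i) (p a) (p b) (bs a) (bs b) (memb a) (memb b)]
  -- symmetry of A in first two indices
  have symA2 : ∀ i j a : ι, A j i a = sg K (p i * p j) * A i j a := by
    intro i j a
    simp only [hA]
    rw [show θA * bs j * bs i * bs a = θA * (bs j * bs i) * bs a by rw [mul_assoc θA],
      show θA * bs i * bs j * bs a = θA * (bs i * bs j) * bs a by rw [mul_assoc θA],
      hsg1 θA j i (bs a), mul_comm (p j) (p i)]
  -- symmetry of C
  have symC : ∀ i a b : ι, C i a b = sg K (p a * p b) * C i b a := by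
    intro i a b
    simp only [hC]
    rw [show θC * bs i * f a * f b = θC * bs i * (f a * f b) by rw [mul_assoc],
      show θC * bs i * f b * f a = θC * bs i * (f b * f a) by rw [mul_assoc],
      hsg2 θC (bs i) (p a) (p b) (f a) (f b) (hfspan a) (hfspan b)]
  -- scalar helper identities
  have scX : ∀ s t n : K, s * s = 1 → t * t = 1 → n + t * (t * n) + s * (s * n) = 3 * n := by
    intro s t n hs ht
    linear_combination n * hs + n * ht
  have scX' : ∀ s n : K, s * s = 1 → 3 * n = s * (3 * (s * n)) := by
    intro s n hs
    linear_combination (-3 * n) * hs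
  have scY : ∀ s t m q : K, s * s = 1 → t * t = 1 → m + t * (t * q) + s * (s * m) = 2 * m + q := by
    intro s t m q hs ht
    linear_combination q * ht + m * hs
  have scY' : ∀ s m q : K, s * s = 1 → 2 * m + q = s * (2 * (s * m) + s * q) := by
    intro s m q hs
    linear_combination (-(2 * m + q)) * hs
  have scZ : ∀ s g w : K, s * s = 1 →
      (2:K)⁻¹ * g + s * w = s * ((2:K)⁻¹ * (s * g) + s * (s * w)) := by
    intro s g w hs
    linear_combination (-((2:K)⁻¹ * g + s * w)) * hs
  refine ⟨even, symA, symA2, symC, hf, ?_, ?_, ?_, ?_⟩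
  -- (BA)
  · intro i j a b
    have lhs_eq : ∀ i j : ι, lhsBA K ι p A B i j a b
        = 3 * φ (θA * θB * (bs j * bs i) * (bs a * bs b)) := by
      intro i j
      unfold lhsBA
      rw [Finset.sum_add_distrib, ← Finset.mul_sum, TBA1 i j a b, TBA1 i j b a, TBA3 i j a b]
      rw [hsg2 (θA * θB) (bs j * bs i) (p b) (p a) (bs b) (bs a) (memb b) (memb a),
        mul_comm (p b) (p a), hsg1 (θA * θB) i j (bs a * bs b)]
      exact scX _ _ _ (aux_sg_mul_self _) (aux_sg_mul_self _)
    rw [lhs_eq i j, lhs_eq j i, hsg1 (θA * θB) i j (bs a * bs b)]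
    exact scX' _ _ (aux_sg_mul_self _)
  -- (BB−CA)
  · intro i j a b
    have lhs_eq : ∀ i j : ι, lhsBBCA K ι p A B C i j a b
        = 2 * φ (θB * θB * (bs j * bs i) * (bs a * f b))
          + φ (θA * θC * (bs j * bs i) * (bs a * f b)) := by
      intro i j
      unfold lhsBBCA
      rw [Finset.sum_add_distrib, ← Finset.mul_sum, TBB1 i j a b, TCA2 i j a b, TBB3 i j a b]
      rw [hsg2 (θA * θC) (bs j * bs i) (p b) (p a) (f b) (bs a) (hfspan b) (memb a),
        mul_comm (p b) (p a), hsg1 (θB * θB) i j (bs a * f b)]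
      exact scY _ _ _ _ (aux_sg_mul_self _) (aux_sg_mul_self _)
    rw [lhs_eq i j, lhs_eq j i, hsg1 (θB * θB) i j (bs a * f b),
      hsg1 (θA * θC) i j (bs a * f b)]
    exact scY' _ _ _ (aux_sg_mul_self _)
  -- (CB)
  · intro i j a b
    have lhs_eq : ∀ i j : ι, lhsCB K ι p B C i j a b
        = 3 * φ (θB * θC * (bs j * bs i) * (f a * f b)) := by
      intro i j
      unfold lhsCB
      rw [Finset.sum_add_distrib, ← Finset.mul_sum, TCB1 i j a b, TCB1 i j b a, TCB3 i j a b]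
      rw [hsg2 (θB * θC) (bs j * bs i) (p b) (p a) (f b) (f a) (hfspan b) (hfspan a),
        mul_comm (p b) (p a), hsg1 (θB * θC) i j (f a * f b)]
      exact scX _ _ _ (aux_sg_mul_self _) (aux_sg_mul_self _)
    rw [lhs_eq i j, lhs_eq j i, hsg1 (θB * θC) i j (f a * f b)]
    exact scX' _ _ (aux_sg_mul_self _)
  -- (CA−BD)
  · intro i j
    have W1 : ∀ i j : ι, (∑ a : ι, ∑ b : ι, C i b a * A j a b)
        = ∑ b : ι, φ (θA * θC * (bs j * bs i) * (f b * bs b)) := by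
      intro i j
      rw [Finset.sum_comm]
      exact Finset.sum_congr rfl fun b _ => TCA2 i j b b
    have h1 : (∑ b : ι, φ (θA * θC * (bs i * bs j) * (f b * bs b)))
        = sg K (p i * p j) * ∑ b : ι, φ (θA * θC * (bs j * bs i) * (f b * bs b)) := by
      rw [Finset.mul_sum]
      exact Finset.sum_congr rfl fun b _ => hsg1 (θA * θC) i j (f b * bs b)
    have h2 : (∑ k : ι, B j i k * D k) = sg K (p i * p j) * ∑ k : ι, B i j k * D k := by
      rw [Finset.mul_sum]
      refine Finset.sum_congr rfl fun k _ => ?_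
      rw [← hf i j k, mul_assoc]
    unfold lhsCABD
    rw [W1 i j, W1 j i, h1, h2, mul_comm (p j) (p i)]
    exact scZ _ _ _ (aux_sg_mul_self _)

end
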